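/- Fix μ ∈ ℝ^m and define d ∈ ℝ^m by d_j = exp(μ_j) − Σ_{i : j ∈ 𝒥_i(μ)} B_i/|𝒥_i(μ)| for j ∈ {1,…,m}, where |𝒥_i(μ)| is the cardinality of 𝒥_i(μ). Then (a) ∇F_δ(μ) → d as δ → 0⁺, and (b) d is a subgradient of F at μ, i.e., F(ν) ≥ F(μ) + Σ_{j=1}^m d_j·(ν_j − μ_j) for all ν ∈ ℝ^m. -/

import Mathlib

open scoped Classical

noncomputable section

/-- Extended valuation vector of buyer `i`: index `0` gets value `1` (the convention
`v_{i0} = 1`), index `j+1` gets `v i j`. -/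
def extV {n m : ℕ} (v : Fin n → Fin m → ℝ) (i : Fin n) : Fin (m + 1) → ℝ :=
  Fin.cons 1 (v i)

/-- Extended log-price vector: index `0` gets `0` (the convention `μ₀ = 0`),
index `j+1` gets `μ j`. -/
def extMu {m : ℕ} (μ : Fin m → ℝ) : Fin (m + 1) → ℝ :=
  Fin.cons 0 μ

/-- The smoothed weight `exp((log v_{ij} − μ_j)/δ) = v_{ij}^{1/δ} · exp(−μ_j/δ)`,
with the conventions `log 0 = −∞`, `exp (−∞) = 0` (via `0 ^ (1/δ) = 0` for `δ > 0`). -/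
def wt {n m : ℕ} (v : Fin n → Fin m → ℝ) (δ : ℝ) (μ : Fin m → ℝ) (i : Fin n)
    (j : Fin (m + 1)) : ℝ :=
  extV v i j ^ (1 / δ) * Real.exp (-extMu μ j / δ)

/-- The smoothed objective `F_δ`. -/
def Fd {n m : ℕ} (B : Fin n → ℝ) (v : Fin n → Fin m → ℝ) (δ : ℝ) (μ : Fin m → ℝ) : ℝ :=
  (∑ j, Real.exp (μ j)) + δ * ∑ i, B i * Real.log (∑ j, wt v δ μ i j)

/-- The gradient of the smoothed objective `F_δ`. -/
def gradFd {n m : ℕ} (B : Fin n → ℝ) (v : Fin n → Fin m → ℝ) (δ : ℝ) (μ : Fin m → ℝ)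
    (j : Fin m) : ℝ :=
  Real.exp (μ j) - ∑ i, B i * (wt v δ μ i j.succ / ∑ j', wt v δ μ i j')

/-- The value `v_{ij} · exp(−μ_j)` (over extended indices), whose logarithm is
`log v_{ij} − μ_j` with the convention `log 0 = −∞`. -/
def valF {n m : ℕ} (v : Fin n → Fin m → ℝ) (μ : Fin m → ℝ) (i : Fin n) (j : Fin (m + 1)) : ℝ :=
  extV v i j * Real.exp (-extMu μ j)

/-- `h_i(μ) = max_{j ∈ {0,…,m}} (log v_{ij} − μ_j)`, realized as the logarithm of the
(positive) maximum of the values `v_{ij} e^{−μ_j}`. -/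
def hMax {n m : ℕ} (v : Fin n → Fin m → ℝ) (μ : Fin m → ℝ) (i : Fin n) : ℝ :=
  Real.log (Finset.univ.sup' Finset.univ_nonempty (valF v μ i))

/-- The nonsmooth objective `F`. -/
def Fobj {n m : ℕ} (B : Fin n → ℝ) (v : Fin n → Fin m → ℝ) (μ : Fin m → ℝ) : ℝ :=
  (∑ j, Real.exp (μ j)) + ∑ i, B i * hMax v μ i

/-- The active index set `𝒥_i(μ) = {j ∈ {0,…,m} : log v_{ij} − μ_j = h_i(μ)}`. -/
def activeSet {n m : ℕ} (v : Fin n → Fin m → ℝ) (μ : Fin m → ℝ) (i : Fin n) :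
    Finset (Fin (m + 1)) :=
  Finset.univ.filter fun j =>
    valF v μ i j = Finset.univ.sup' Finset.univ_nonempty (valF v μ i)

/-- The Euclidean norm on `ℝ^m`. -/
def enorm2 {m : ℕ} (x : Fin m → ℝ) : ℝ :=
  Real.sqrt (∑ j, x j ^ 2)

end

noncomputable section AuxProofs

open Filter Finset

variable {n m : ℕ} (v : Fin n → Fin m → ℝ) (μ : Fin m → ℝ)

lemma extV_nonneg (hv : ∀ i j, 0 ≤ v i j) (i : Fin n) (j : Fin (m + 1)) :
    0 ≤ extV v i j := by
  refine Fin.cases ?_ ?_ j <;> simp [extV, hv]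

lemma valF_nonneg (hv : ∀ i j, 0 ≤ v i j) (i : Fin n) (j : Fin (m + 1)) :
    0 ≤ valF v μ i j :=
  mul_nonneg (extV_nonneg v hv i j) (Real.exp_nonneg _)

lemma valF_zero (i : Fin n) : valF v μ i 0 = 1 := by
  simp [valF, extV, extMu]

lemma supV_pos (i : Fin n) :
    0 < Finset.univ.sup' Finset.univ_nonempty (valF v μ i) := by
  have h : valF v μ i 0 ≤ Finset.univ.sup' Finset.univ_nonempty (valF v μ i) :=
    Finset.le_sup' _ (Finset.mem_univ 0)
  rw [valF_zero] at h
  linarith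

lemma activeSet_nonempty (i : Fin n) : (activeSet v μ i).Nonempty := by
  obtain ⟨j, -, hj⟩ := Finset.exists_mem_eq_sup' (Finset.univ_nonempty) (valF v μ i)
  exact ⟨j, Finset.mem_filter.mpr ⟨Finset.mem_univ _, hj.symm⟩⟩

lemma wt_eq_rpow {δ : ℝ} (hv : ∀ i j, 0 ≤ v i j) (i : Fin n) (j : Fin (m + 1)) :
    wt v δ μ i j = valF v μ i j ^ (1 / δ) := by
  unfold wt valF
  rw [Real.mul_rpow (extV_nonneg v hv i j) (Real.exp_nonneg _), ← Real.exp_mul]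
  ring_nf

lemma rpow_inv_tendsto {a : ℝ} (h0 : 0 ≤ a) (h1 : a ≤ 1) :
    Filter.Tendsto (fun δ : ℝ => a ^ (1 / δ)) (nhdsWithin 0 (Set.Ioi 0))
      (nhds (if a = 1 then 1 else 0)) := by
  rcases eq_or_lt_of_le h1 with rfl | hlt
  · simp only [if_pos rfl, Real.one_rpow]
    exact tendsto_const_nhds
  · rw [if_neg hlt.ne]
    have h := (tendsto_rpow_atTop_of_base_lt_one a (by linarith) hlt).comp
      tendsto_inv_nhdsGT_zero
    simpa [Function.comp_def, one_div] using h

lemma ratio_tendsto (hv : ∀ i j, 0 ≤ v i j) (i : Fin n) (j : Fin (m + 1)) :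
    Filter.Tendsto (fun δ : ℝ => wt v δ μ i j / ∑ j', wt v δ μ i j')
      (nhdsWithin 0 (Set.Ioi 0))
      (nhds ((if j ∈ activeSet v μ i then (1 : ℝ) else 0) / (activeSet v μ i).card)) := by
  set M := Finset.univ.sup' Finset.univ_nonempty (valF v μ i) with hM
  have hMpos : 0 < M := supV_pos v μ i
  have hmem : ∀ j' : Fin (m + 1),
      (j' ∈ activeSet v μ i) ↔ valF v μ i j' / M = 1 := by
    intro j'
    rw [div_eq_one_iff_eq hMpos.ne']
    simp [activeSet, ← hM]
  have key : ∀ j' : Fin (m + 1),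
      Filter.Tendsto (fun δ : ℝ => (valF v μ i j' / M) ^ (1 / δ))
        (nhdsWithin 0 (Set.Ioi 0))
        (nhds (if j' ∈ activeSet v μ i then (1 : ℝ) else 0)) := by
    intro j'
    have h0 : 0 ≤ valF v μ i j' / M := div_nonneg (valF_nonneg v μ hv i j') hMpos.le
    have h1 : valF v μ i j' / M ≤ 1 :=
      div_le_one_of_le₀ (Finset.le_sup' _ (Finset.mem_univ j')) hMpos.le
    have h := rpow_inv_tendsto h0 h1
    have heq : (if valF v μ i j' / M = 1 then (1:ℝ) else 0)
        = (if j' ∈ activeSet v μ i then (1:ℝ) else 0) := by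
      simp only [hmem]
    rwa [heq] at h
  have hden : Filter.Tendsto (fun δ : ℝ => ∑ j', (valF v μ i j' / M) ^ (1 / δ))
      (nhdsWithin 0 (Set.Ioi 0))
      (nhds ((activeSet v μ i).card : ℝ)) := by
    have h := tendsto_finset_sum Finset.univ (fun j' _ => key j')
    have hsum : (∑ j' : Fin (m + 1), if j' ∈ activeSet v μ i then (1:ℝ) else 0)
        = ((activeSet v μ i).card : ℝ) := by
      rw [Finset.sum_ite_mem, Finset.univ_inter, Finset.sum_const, nsmul_eq_mul, mul_one]
    rwa [hsum] at h
  have hcard : ((activeSet v μ i).card : ℝ) ≠ 0 := by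
    have := Finset.card_pos.mpr (activeSet_nonempty v μ i)
    positivity
  have hdiv := (key j).div hden hcard
  refine hdiv.congr' ?_
  refine Filter.eventuallyEq_of_mem self_mem_nhdsWithin (fun δ hδ => ?_)
  have hδ : (0:ℝ) < δ := hδ
  have hc : (0:ℝ) < M ^ (1 / δ) := Real.rpow_pos_of_pos hMpos _
  have hw : ∀ j' : Fin (m + 1), (valF v μ i j' / M) ^ (1 / δ) = wt v δ μ i j' / M ^ (1 / δ) := by
    intro j'
    rw [Real.div_rpow (valF_nonneg v μ hv i j') hMpos.le, wt_eq_rpow v μ hv]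
  show (valF v μ i j / M) ^ (1 / δ) / (∑ j', (valF v μ i j' / M) ^ (1 / δ))
      = wt v δ μ i j / ∑ j', wt v δ μ i j'
  simp only [hw]
  rw [← Finset.sum_div, div_div_div_cancel_right₀ hc.ne']

lemma hMax_step (hv : ∀ i j, 0 ≤ v i j) (ν : Fin m → ℝ) (i : Fin n) :
    (((activeSet v μ i).card : ℝ)) * hMax v μ i
      - ∑ j ∈ activeSet v μ i, (extMu ν j - extMu μ j)
      ≤ ((activeSet v μ i).card : ℝ) * hMax v ν i := by
  have hMpos := supV_pos v μ i
  have hkey : ∀ j ∈ activeSet v μ i,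
      hMax v μ i - (extMu ν j - extMu μ j) ≤ hMax v ν i := by
    intro j hj
    have hjval : valF v μ i j = Finset.univ.sup' Finset.univ_nonempty (valF v μ i) :=
      (Finset.mem_filter.mp hj).2
    have hvalpos : 0 < valF v μ i j := hjval ▸ hMpos
    have hVpos : 0 < extV v i j := by
      rcases (extV_nonneg v hv i j).lt_or_eq with h | h
      · exact h
      · exfalso; rw [valF, ← h, zero_mul] at hvalpos; exact lt_irrefl 0 hvalpos
    have hνpos : 0 < valF v ν i j := mul_pos hVpos (Real.exp_pos _)
    have hle : valF v ν i j ≤ Finset.univ.sup' Finset.univ_nonempty (valF v ν i) :=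
      Finset.le_sup' _ (Finset.mem_univ j)
    have h1 : hMax v μ i = Real.log (extV v i j) - extMu μ j := by
      rw [hMax, ← hjval, valF, Real.log_mul hVpos.ne' (Real.exp_ne_zero _), Real.log_exp]
      ring
    have h2 : Real.log (valF v ν i j) = Real.log (extV v i j) - extMu ν j := by
      rw [valF, Real.log_mul hVpos.ne' (Real.exp_ne_zero _), Real.log_exp]; ring
    have h3 : Real.log (valF v ν i j) ≤ hMax v ν i := Real.log_le_log hνpos hle
    rw [h2] at h3
    rw [h1]; linarith
  have hsum := Finset.sum_le_sum hkey
  rw [Finset.sum_sub_distrib, Finset.sum_const, Finset.sum_const, nsmul_eq_mul,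
    nsmul_eq_mul] at hsum
  linarith

lemma sum_d_eq (B : Fin n → ℝ) (d : Fin m → ℝ) (ν : Fin m → ℝ)
    (hd : ∀ j, d j = Real.exp (μ j) -
      ∑ i ∈ Finset.univ.filter (fun i => j.succ ∈ activeSet v μ i),
        B i / (activeSet v μ i).card) :
    ∑ j, d j * (ν j - μ j)
      = (∑ j, Real.exp (μ j) * (ν j - μ j))
        - ∑ i, (B i / (activeSet v μ i).card)
            * ∑ j ∈ activeSet v μ i, (extMu ν j - extMu μ j) := by
  have hΔ : ∀ i, ∑ j ∈ activeSet v μ i, (extMu ν j - extMu μ j)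
      = ∑ k : Fin m, (if k.succ ∈ activeSet v μ i then ν k - μ k else 0) := by
    intro i
    rw [← Finset.filter_univ_mem (activeSet v μ i), Finset.sum_filter, Fin.sum_univ_succ]
    simp [extMu]
  simp only [hd, sub_mul, Finset.sum_sub_distrib]
  congr 1
  have hrow : ∀ j : Fin m,
      (∑ i ∈ Finset.univ.filter (fun i => j.succ ∈ activeSet v μ i),
        B i / (activeSet v μ i).card) * (ν j - μ j)
      = ∑ i, (B i / (activeSet v μ i).card)
          * (if j.succ ∈ activeSet v μ i then ν j - μ j else 0) := by
    intro j
    rw [Finset.sum_filter, Finset.sum_mul]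
    refine Finset.sum_congr rfl fun i _ => ?_
    split_ifs <;> simp
  simp only [hrow]
  rw [Finset.sum_comm]
  refine Finset.sum_congr rfl fun i _ => ?_
  rw [← Finset.sum_sub_distrib, hΔ i, Finset.mul_sum]

lemma part_b (B : Fin n → ℝ) (hB : ∀ i, 0 < B i) (hv : ∀ i j, 0 ≤ v i j)
    (d : Fin m → ℝ)
    (hd : ∀ j, d j = Real.exp (μ j) -
      ∑ i ∈ Finset.univ.filter (fun i => j.succ ∈ activeSet v μ i),
        B i / (activeSet v μ i).card)
    (ν : Fin m → ℝ) :
    Fobj B v μ + ∑ j, d j * (ν j - μ j) ≤ Fobj B v ν := by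
  have hexp : ∀ j : Fin m, Real.exp (μ j) + Real.exp (μ j) * (ν j - μ j) ≤ Real.exp (ν j) := by
    intro j
    have h := Real.add_one_le_exp (ν j - μ j)
    have h2 := mul_le_mul_of_nonneg_left h (Real.exp_nonneg (μ j))
    rw [← Real.exp_add] at h2
    have hμν : μ j + (ν j - μ j) = ν j := by ring
    rw [hμν] at h2
    nlinarith [Real.exp_pos (μ j)]
  have hexpsum : (∑ j, Real.exp (μ j)) + (∑ j, Real.exp (μ j) * (ν j - μ j))
      ≤ ∑ j, Real.exp (ν j) := by
    rw [← Finset.sum_add_distrib]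
    exact Finset.sum_le_sum fun j _ => hexp j
  have hstep : ∀ i, B i * hMax v μ i
      - (B i / (activeSet v μ i).card) * ∑ j ∈ activeSet v μ i, (extMu ν j - extMu μ j)
      ≤ B i * hMax v ν i := by
    intro i
    have hA := hMax_step v μ hv ν i
    have hcard : (0:ℝ) < ((activeSet v μ i).card : ℝ) := by
      have := Finset.card_pos.mpr (activeSet_nonempty v μ i)
      positivity
    have hq : 0 < B i / ((activeSet v μ i).card : ℝ) := div_pos (hB i) hcard
    have h := mul_le_mul_of_nonneg_left hA hq.le
    have e1 : B i / ((activeSet v μ i).card : ℝ) * (((activeSet v μ i).card : ℝ) * hMax v μ i)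
        = B i * hMax v μ i := by field_simp
    have e2 : B i / ((activeSet v μ i).card : ℝ) * (((activeSet v μ i).card : ℝ) * hMax v ν i)
        = B i * hMax v ν i := by field_simp
    rw [mul_sub, e1, e2] at h
    linarith
  have hstepsum : (∑ i, B i * hMax v μ i)
      - (∑ i, (B i / (activeSet v μ i).card)
          * ∑ j ∈ activeSet v μ i, (extMu ν j - extMu μ j))
      ≤ ∑ i, B i * hMax v ν i := by
    rw [← Finset.sum_sub_distrib]
    exact Finset.sum_le_sum fun i _ => hstep i
  rw [Fobj, Fobj, sum_d_eq v μ B d ν hd]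
  linarith

end AuxProofs

/-- the vector `d` with
`d_j = exp(μ_j) − Σ_{i : j ∈ 𝒥_i(μ)} B_i/|𝒥_i(μ)|` is the limit of `∇F_δ(μ)` as
`δ → 0⁺`, and it is a subgradient of `F` at `μ`. -/
theorem grad_fdelta_limit_subgradient
    (n m : ℕ) (hn : 1 ≤ n) (hm : 1 ≤ m)
    (B : Fin n → ℝ) (hB : ∀ i, 0 < B i)
    (v : Fin n → Fin m → ℝ) (hv : ∀ i j, 0 ≤ v i j)
    (μ : Fin m → ℝ) (d : Fin m → ℝ)
    (hd : ∀ j, d j = Real.exp (μ j) -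
      ∑ i ∈ Finset.univ.filter (fun i => j.succ ∈ activeSet v μ i),
        B i / (activeSet v μ i).card) :
    (∀ j, Filter.Tendsto (fun δ : ℝ => gradFd B v δ μ j)
        (nhdsWithin 0 (Set.Ioi 0)) (nhds (d j))) ∧
      ∀ ν : Fin m → ℝ, Fobj B v μ + ∑ j, d j * (ν j - μ j) ≤ Fobj B v ν := by
  constructor
  · intro j
    have hlim := Filter.Tendsto.sub (tendsto_const_nhds (x := Real.exp (μ j)))
      (tendsto_finset_sum Finset.univ fun i _ =>
        (ratio_tendsto v μ hv i j.succ).const_mul (B i))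
    have hdval : d j = Real.exp (μ j)
        - ∑ i, B i * ((if j.succ ∈ activeSet v μ i then (1:ℝ) else 0)
            / (activeSet v μ i).card) := by
      rw [hd j]
      congr 1
      rw [Finset.sum_filter]
      refine Finset.sum_congr rfl fun i _ => ?_
      split_ifs <;> simp [div_eq_mul_inv]
    rw [hdval]
    exact hlim
  · exact part_b v μ B hB hv d hd
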